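/- arXiv:0710.3997 — 2 statements merged into one kernel-verified Lean document; each statement's English description precedes it below -/
import Mathlib

section
/- The group Homeo⁺(S¹) of orientation preserving homeomorphisms of the circle is uniformly perfect: every element is a product of at most 3 commutators. -/
noncomputable section

open scoped Classical

local instance : Fact ((0:ℝ) < 1) := ⟨zero_lt_one⟩

/-- The circle `S¹`, realised as `ℝ / ℤ`. -/
abbrev S1 := AddCircle (1 : ℝ)

/-- `F` is a (monotone, degree one) lift of the circle homeomorphism `f`. -/
def IsLiftOf (f : S1 ≃ₜ S1) (F : CircleDeg1Lift) : Prop :=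
  ∀ x : ℝ, f (x : S1) = ((F x : ℝ) : S1)

/-- A circle homeomorphism is orientation preserving iff it admits a monotone degree one lift. -/
def OrientationPreserving (f : S1 ≃ₜ S1) : Prop :=
  ∃ F : CircleDeg1Lift, IsLiftOf f F

/-- A circle homeomorphism is orientation reversing iff it admits a strictly decreasing
degree `-1` lift. -/
def OrientationReversing (f : S1 ≃ₜ S1) : Prop :=
  ∃ F : ℝ → ℝ, StrictAnti F ∧ (∀ x : ℝ, F (x + 1) = F x - 1) ∧
    ∀ x : ℝ, f (x : S1) = ((F x : ℝ) : S1)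

/-- `f` has (Poincaré) rotation number `r` (mod 1): some lift has translation number `r`. -/
def HasRotationNumber (f : S1 ≃ₜ S1) (r : ℝ) : Prop :=
  ∃ F : CircleDeg1Lift, IsLiftOf f F ∧ F.translationNumber = r

/-- An involution. -/
def IsInvolution (f : S1 ≃ₜ S1) : Prop := ∀ x, f (f x) = x

/-- The canonical representative of a point of the circle in `[0, 1)`. -/
def rep (x : S1) : ℝ := (AddCircle.equivIco 1 0 x : ℝ)

/-- The signature of a circle homeomorphism with respect to a lift `F`; when `F` is the
(unique) lift with a fixed point of an orientation preserving homeomorphism with a fixed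
point, this is the signature function `Δ_f : S¹ → {-1, 0, 1}`. -/
def signature (F : CircleDeg1Lift) (x : S1) : ℝ := Real.sign (F (rep x) - rep x)

/-- Strong reversibility in `Homeo⁺(S¹)`. -/
def StronglyReversiblePlus (f : S1 ≃ₜ S1) : Prop :=
  ∃ σ : S1 ≃ₜ S1, OrientationPreserving σ ∧ IsInvolution σ ∧ ∀ x, σ (f (σ x)) = f.symm x

/-- Strong reversibility in the full group `Homeo(S¹)`. -/
def StronglyReversible (f : S1 ≃ₜ S1) : Prop :=
  ∃ τ : S1 ≃ₜ S1, IsInvolution τ ∧ ∀ x, τ (f (τ x)) = f.symm x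


namespace UP
open Set







section

lemma coe_eq_coe {x y : ℝ} : (x : S1) = (y : S1) ↔ ∃ k : ℤ, y = x + k := by
  rw [QuotientAddGroup.eq]
  simp only [AddSubgroup.mem_zmultiples_iff]
  constructor
  · rintro ⟨k, hk⟩; exact ⟨k, by simp at hk; linarith⟩
  · rintro ⟨k, hk⟩; exact ⟨k, by simp [hk]⟩

lemma coe_add_int (x : ℝ) (k : ℤ) : ((x + k : ℝ) : S1) = (x : S1) := by
  symm
  rw [coe_eq_coe]
  exact ⟨k, rfl⟩

/-- Periodicity predicate: commutes with translation by 1. -/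
def Per (F : ℝ → ℝ) : Prop := ∀ x, F (x + 1) = F x + 1

lemma Per.int {F : ℝ → ℝ} (h : Per F) : ∀ (k : ℤ) (x : ℝ), F (x + k) = F x + k := by
  have key : ∀ n : ℕ, ∀ x : ℝ, F (x + n) = F x + n := by
    intro n
    induction n with
    | zero => simp
    | succ m ih => intro x; push_cast; rw [← add_assoc, h, ih]; ring
  intro k x
  cases k with
  | ofNat n => simpa using key n x
  | negSucc n =>
      set y := x - ((n : ℝ) + 1) with hy
      have h1 := key (n + 1) y
      have h2 : y + ((n : ℕ) + 1 : ℕ) = x := by push_cast; ring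
      rw [h2] at h1
      have hxy : x + (Int.negSucc n : ℝ) = y := by
        rw [hy]; push_cast; ring
      rw [hxy]
      push_cast at h1 ⊢
      linarith

lemma Per.symm {F : ℝ ≃o ℝ} (h : Per ⇑F) : Per ⇑F.symm := by
  intro x
  apply F.injective
  rw [OrderIso.apply_symm_apply, h, OrderIso.apply_symm_apply]

/-- The circle homeomorphism induced by a periodic order isomorphism of ℝ. -/
def mkCircle (F : ℝ ≃o ℝ) (h : Per ⇑F) : S1 ≃ₜ S1 where
  toFun := fun x => Quotient.liftOn' x (fun t => ((F t : ℝ) : S1)) (by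
    intro a b hab
    have hab' : (a : S1) = b := Quotient.sound' hab
    obtain ⟨k, hk⟩ := coe_eq_coe.mp hab'
    subst hk
    show ((F a : ℝ) : S1) = ((F (a + k) : ℝ) : S1)
    rw [h.int k a, coe_add_int])
  invFun := fun x => Quotient.liftOn' x (fun t => ((F.symm t : ℝ) : S1)) (by
    intro a b hab
    have hab' : (a : S1) = b := Quotient.sound' hab
    obtain ⟨k, hk⟩ := coe_eq_coe.mp hab'
    subst hk
    show ((F.symm a : ℝ) : S1) = ((F.symm (a + k) : ℝ) : S1)
    rw [h.symm.int k a, coe_add_int])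
  left_inv := by
    intro x
    induction x using QuotientAddGroup.induction_on
    simp
  right_inv := by
    intro x
    induction x using QuotientAddGroup.induction_on
    simp
  continuous_toFun := by
    apply Continuous.quotient_liftOn'
    exact continuous_quotient_mk'.comp F.continuous
  continuous_invFun := by
    apply Continuous.quotient_liftOn'
    exact continuous_quotient_mk'.comp F.symm.continuous

@[simp] lemma mkCircle_apply (F : ℝ ≃o ℝ) (h : Per ⇑F) (t : ℝ) :
    mkCircle F h (t : S1) = ((F t : ℝ) : S1) := rfl

@[simp] lemma mkCircle_symm_apply (F : ℝ ≃o ℝ) (h : Per ⇑F) (t : ℝ) :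
    (mkCircle F h).symm (t : S1) = ((F.symm t : ℝ) : S1) := rfl

end




section

variable (k : ℝ ≃o ℝ)

/-- Integer powers of the underlying permutation. -/
def pw (n : ℤ) : Equiv.Perm ℝ := k.toEquiv ^ n

lemma pw_add (m n : ℤ) (x : ℝ) : pw k (m + n) x = pw k m (pw k n x) := by
  rw [pw, zpow_add]; rfl

lemma pw_zero (x : ℝ) : pw k 0 x = x := rfl

lemma pw_one (x : ℝ) : pw k 1 x = k x := rfl

lemma pw_succ (n : ℤ) (x : ℝ) : pw k (n + 1) x = k (pw k n x) := by
  rw [add_comm, pw_add, pw_one]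

lemma pw_strictMono (n : ℤ) : StrictMono (pw k n) := by
  induction n using Int.induction_on with
  | zero => exact fun a b h => h
  | succ m ih => intro a b h; rw [pw_succ, pw_succ]; exact k.strictMono (ih h)
  | pred m ih =>
      intro a b h
      have e : ∀ x, pw k (-m - 1) x = k.symm (pw k (-m) x) := by
        intro x
        apply k.injective
        have := pw_succ k (-m - 1) x
        simp only [sub_add_cancel] at this
        rw [← this, OrderIso.apply_symm_apply]
      rw [e, e]
      exact k.symm.strictMono (ih h)

variable (hk : ∀ x, x < k x)

/-- Orbit of 0. -/
def orb (n : ℤ) : ℝ := pw k n 0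

include hk in
lemma orb_strictMono : StrictMono (orb k) := by
  have : ∀ n : ℤ, orb k n < orb k (n + 1) := by
    intro n; rw [orb, orb, pw_succ]; exact hk _
  exact strictMono_int_of_lt_succ this

include hk in
lemma orb_exists_le (y : ℝ) : ∃ n : ℤ, orb k n ≤ y := by
  by_contra hcon
  push_neg at hcon
  set t := sInf (range (orb k)) with ht
  have hbdd : BddBelow (range (orb k)) := ⟨y, by rintro _ ⟨n, rfl⟩; exact (hcon n).le⟩
  have hne : (range (orb k)).Nonempty := ⟨orb k 0, ⟨0, rfl⟩⟩
  have hlb : ∀ n : ℤ, t ≤ orb k n := fun n => csInf_le hbdd ⟨n, rfl⟩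
  have h1 : t < k t := hk t
  have h2 : ∃ n : ℤ, orb k n < k t := by
    by_contra hc
    push_neg at hc
    have : k t ≤ t := le_csInf hne (by rintro _ ⟨n, rfl⟩; exact hc n)
    linarith
  obtain ⟨n, hn⟩ := h2
  have : orb k (n - 1) < t := by
    have : pw k (n - 1) 0 = k.symm (pw k n 0) := by
      apply k.injective
      have := pw_succ k (n - 1) 0
      simp only [sub_add_cancel] at this
      rw [← this, OrderIso.apply_symm_apply]
    rw [orb, this]
    calc k.symm (pw k n 0) < k.symm (k t) := k.symm.strictMono hn
    _ = t := k.symm_apply_apply t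
  exact absurd (hlb (n - 1)) (not_le.mpr this)

include hk in
lemma orb_exists_gt (y : ℝ) : ∃ n : ℤ, y < orb k n := by
  by_contra hcon
  push_neg at hcon
  set s := sSup (range (orb k)) with hs
  have hbdd : BddAbove (range (orb k)) := ⟨y, by rintro _ ⟨n, rfl⟩; exact hcon n⟩
  have hne : (range (orb k)).Nonempty := ⟨orb k 0, ⟨0, rfl⟩⟩
  have hub : ∀ n : ℤ, orb k n ≤ s := fun n => le_csSup hbdd ⟨n, rfl⟩
  have h1 : k.symm s < s := by
    have := hk (k.symm s); rwa [OrderIso.apply_symm_apply] at this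
  have h2 : ∃ n : ℤ, k.symm s < orb k n := by
    by_contra hc
    push_neg at hc
    have : s ≤ k.symm s := csSup_le hne (by rintro _ ⟨n, rfl⟩; exact hc n)
    linarith
  obtain ⟨n, hn⟩ := h2
  have : s < orb k (n + 1) := by
    rw [orb, pw_succ]
    have := k.strictMono hn
    rwa [OrderIso.apply_symm_apply] at this
  exact absurd (hub (n + 1)) (not_le.mpr this)

include hk in
lemma exists_nice (y : ℝ) : ∃ n : ℤ, orb k n ≤ y ∧ y < orb k (n + 1) := by
  obtain ⟨lo, hlo⟩ := orb_exists_le k hk y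
  obtain ⟨hi, hhi⟩ := orb_exists_gt k hk y
  obtain ⟨n, hn, hmax⟩ := Int.exists_greatest_of_bdd (P := fun n => orb k n ≤ y)
    (by
      refine ⟨hi, fun z hz => ?_⟩
      by_contra hzc
      push_neg at hzc
      have := (orb_strictMono k hk) (show hi < z by omega)
      have := lt_of_le_of_lt hz hhi
      linarith)
    ⟨lo, hlo⟩
  refine ⟨n, hn, ?_⟩
  by_contra hc
  push_neg at hc
  exact absurd (hmax (n+1) hc) (by omega)

include hk in
lemma nice_unique {y : ℝ} {n m : ℤ} (hn : orb k n ≤ y ∧ y < orb k (n+1))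
    (hm : orb k m ≤ y ∧ y < orb k (m+1)) : n = m := by
  have h1 : n < m + 1 := by
    by_contra hc
    push_neg at hc
    have := (orb_strictMono k hk).le_iff_le.mpr hc
    linarith [hm.2, hn.1]
  have h2 : m < n + 1 := by
    by_contra hc
    push_neg at hc
    have := (orb_strictMono k hk).le_iff_le.mpr hc
    linarith [hn.2, hm.1]
  omega

end

section
variable (k : ℝ ≃o ℝ) (hk : ∀ x, x < k x)

lemma pw_cancel (n : ℤ) (x : ℝ) : pw k (-n) (pw k n x) = x := by
  rw [← pw_add, neg_add_cancel, pw_zero]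

include hk

/-- The cell index of `y`. -/
def nfun (y : ℝ) : ℤ := Classical.choose (exists_nice k hk y)

lemma nfun_spec (y : ℝ) : orb k (nfun k hk y) ≤ y ∧ y < orb k (nfun k hk y + 1) :=
  Classical.choose_spec (exists_nice k hk y)

lemma nfun_eq {y : ℝ} {n : ℤ} (h : orb k n ≤ y ∧ y < orb k (n+1)) : nfun k hk y = n :=
  nice_unique k hk (nfun_spec k hk y) h

/-- The conjugacy. -/
def phifun (y : ℝ) : ℝ := (nfun k hk y : ℝ) + pw k (-(nfun k hk y)) y / k 0

lemma k0_pos : 0 < k 0 := hk 0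

lemma frac_mem (y : ℝ) : 0 ≤ pw k (-(nfun k hk y)) y ∧ pw k (-(nfun k hk y)) y < k 0 := by
  obtain ⟨h1, h2⟩ := nfun_spec k hk y
  set n := nfun k hk y
  constructor
  · have := (pw_strictMono k (-n)).le_iff_le.mpr h1
    rwa [orb, pw_cancel] at this
  · have := pw_strictMono k (-n) h2
    rw [orb, ← pw_add] at this
    have he : -n + (n + 1) = 1 := by omega
    rw [he, pw_one] at this
    exact this

lemma nfun_k (y : ℝ) : nfun k hk (k y) = nfun k hk y + 1 := by
  obtain ⟨h1, h2⟩ := nfun_spec k hk y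
  apply nfun_eq
  constructor
  · rw [orb, pw_succ]
    exact k.strictMono.le_iff_le.mpr h1
  · rw [orb, pw_succ]
    exact k.strictMono h2

lemma phifun_k (y : ℝ) : phifun k hk (k y) = phifun k hk y + 1 := by
  rw [phifun, phifun, nfun_k]
  have h1 : pw k (-(nfun k hk y + 1)) (k y) = pw k (-(nfun k hk y)) y := by
    rw [← pw_one k y, ← pw_add]
    have he : -(nfun k hk y + 1) + 1 = -(nfun k hk y) := by omega
    rw [he]
  rw [h1]
  push_cast
  ring

lemma phifun_strictMono : StrictMono (phifun k hk) := by
  intro a b hab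
  have hn : nfun k hk a ≤ nfun k hk b := by
    obtain ⟨ha1, ha2⟩ := nfun_spec k hk a
    obtain ⟨hb1, hb2⟩ := nfun_spec k hk b
    by_contra hc
    push_neg at hc
    have h3 : nfun k hk b + 1 ≤ nfun k hk a := by omega
    have := (orb_strictMono k hk).le_iff_le.mpr h3
    linarith
  rcases eq_or_lt_of_le hn with heq | hlt
  · rw [phifun, phifun, ← heq]
    have h4 := pw_strictMono k (-(nfun k hk a)) hab
    have hpos := k0_pos k hk
    gcongr
  · rw [phifun, phifun]
    obtain ⟨ha1, ha2⟩ := frac_mem k hk a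
    obtain ⟨hb1, hb2⟩ := frac_mem k hk b
    have hpos := k0_pos k hk
    have l1 : pw k (-(nfun k hk a)) a / k 0 < 1 := by
      rw [div_lt_one hpos]; exact ha2
    have l2 : 0 ≤ pw k (-(nfun k hk b)) b / k 0 := by positivity
    have hc : (nfun k hk a : ℝ) + 1 ≤ (nfun k hk b : ℝ) := by exact_mod_cast hlt
    linarith

lemma phifun_surjective : Function.Surjective (phifun k hk) := by
  intro z
  set n := ⌊z⌋ with hn
  set s := (z - n) * k 0 with hs
  have hpos := k0_pos k hk
  have hs1 : 0 ≤ s := by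
    have := Int.floor_le z
    rw [hs]; nlinarith
  have hs2 : s < k 0 := by
    have := Int.lt_floor_add_one z
    rw [hs]; nlinarith
  refine ⟨pw k n s, ?_⟩
  have hnice : orb k n ≤ pw k n s ∧ pw k n s < orb k (n+1) := by
    constructor
    · exact (pw_strictMono k n).le_iff_le.mpr hs1
    · rw [orb, show pw k (n+1) 0 = pw k n (k 0) by rw [pw_add, pw_one]]
      exact pw_strictMono k n hs2
  rw [phifun, nfun_eq k hk hnice, pw_cancel, hs]
  field_simp
  ring

/-- Any fixed-point-free (above the diagonal) increasing bijection of ℝ is conjugate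
to the unit translation. -/
lemma conj_translation : ∃ φ : ℝ ≃o ℝ, ∀ x, φ (k x) = φ x + 1 := by
  refine ⟨StrictMono.orderIsoOfSurjective _ (phifun_strictMono k hk) (phifun_surjective k hk),
    fun x => ?_⟩
  simp only [StrictMono.coe_orderIsoOfSurjective]
  exact phifun_k k hk x

end

section

/-- Every increasing bijection of ℝ is a commutator of increasing bijections. -/
lemma comm_one (g : ℝ ≃o ℝ) :
    ∃ A B : ℝ ≃o ℝ, ∀ x, g x = A (B (A.symm (B.symm x))) := by
  classical
  -- the "positive part" of g
  have hmono : StrictMono (fun x => max (g x) x) :=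
    fun a b h => max_lt_max (g.strictMono h) h
  have hsurj : Function.Surjective (fun x => max (g x) x) := by
    intro y
    rcases le_total (g.symm y) y with h | h
    · refine ⟨g.symm y, ?_⟩
      simp only [OrderIso.apply_symm_apply]
      exact max_eq_left h
    · refine ⟨y, ?_⟩
      have hy : g y ≤ y := by
        have := g.monotone h
        rwa [OrderIso.apply_symm_apply] at this
      exact max_eq_right hy
  set gp : ℝ ≃o ℝ := StrictMono.orderIsoOfSurjective _ hmono hsurj with hgpdef
  have gp_apply : ∀ x, gp x = max (g x) x := fun _ => rfl
  have hgp : ∀ x, x ≤ gp x := fun x => le_max_right _ _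
  set gm : ℝ ≃o ℝ := g.trans gp.symm with hgmdef
  have gm_apply : ∀ x, gm x = gp.symm (g x) := fun _ => rfl
  have hgm : ∀ x, gm x ≤ x := by
    intro x
    rw [gm_apply]
    rw [OrderIso.symm_apply_le]
    rw [gp_apply]
    exact le_max_left _ _
  have hgpm : ∀ x, gp (gm x) = g x := by
    intro x; rw [gm_apply, OrderIso.apply_symm_apply]
  set T : ℝ ≃o ℝ := OrderIso.addRight (1:ℝ) with hTdef
  have T_apply : ∀ x, T x = x + 1 := fun _ => rfl
  set k₁ : ℝ ≃o ℝ := T.trans gp with hk₁def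
  have k₁_apply : ∀ x, k₁ x = gp (x + 1) := fun _ => rfl
  have hk₁ : ∀ x, x < k₁ x := by
    intro x
    calc x < x + 1 := by linarith
    _ ≤ gp (x + 1) := hgp _
  obtain ⟨φ₁, I₁⟩ := conj_translation k₁ hk₁
  set k₂ : ℝ ≃o ℝ := T.symm.trans gm with hk₂def
  have k₂_apply : ∀ x, k₂ x = gm (x + -1) := fun _ => rfl
  have hk₂ : ∀ x, x < k₂.symm x := by
    intro x
    have h1 : k₂ (k₂.symm x) < k₂.symm x := by
      rw [k₂_apply]
      calc gm (k₂.symm x + -1) ≤ k₂.symm x + -1 := hgm _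
      _ < k₂.symm x := by linarith
    rwa [OrderIso.apply_symm_apply] at h1
  obtain ⟨φ₂, I₂⟩ := conj_translation k₂.symm hk₂
  -- derived identities
  have I₁' : ∀ z, φ₁.symm (z + 1) = k₁ (φ₁.symm z) := by
    intro z
    rw [OrderIso.symm_apply_eq, I₁, OrderIso.apply_symm_apply]
  have D₂ : ∀ z, φ₂.symm (z - 1) = k₂ (φ₂.symm z) := by
    intro z
    have h := I₂ (k₂ (φ₂.symm z))
    rw [OrderIso.symm_apply_apply] at h
    rw [OrderIso.apply_symm_apply] at h
    rw [OrderIso.symm_apply_eq]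
    linarith
  refine ⟨φ₁.trans (T.trans φ₁.symm), φ₁.trans (φ₂.symm.trans T.symm), fun x => ?_⟩
  set A : ℝ ≃o ℝ := φ₁.trans (T.trans φ₁.symm) with hAdef
  set B : ℝ ≃o ℝ := φ₁.trans (φ₂.symm.trans T.symm) with hBdef
  have A_apply : ∀ y, A y = φ₁.symm (φ₁ y + 1) := fun _ => rfl
  have B_apply : ∀ y, B y = φ₂.symm (φ₁ y) + -1 := fun _ => rfl
  have hAsymm : ∀ y, A.symm y = φ₁.symm (φ₁ y - 1) := by
    intro y
    rw [OrderIso.symm_apply_eq, A_apply, OrderIso.apply_symm_apply]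
    have h9 : φ₁ y - 1 + 1 = φ₁ y := by ring
    rw [h9]
    exact (φ₁.symm_apply_apply y).symm
  have hBsymm : ∀ y, B.symm y = φ₁.symm (φ₂ (y + 1)) := by
    intro y
    rw [OrderIso.symm_apply_eq, B_apply, OrderIso.apply_symm_apply,
      OrderIso.symm_apply_apply]
    ring
  rw [hBsymm, hAsymm, OrderIso.apply_symm_apply, B_apply, OrderIso.apply_symm_apply]
  have step2 : φ₂.symm (φ₂ (x + 1) - 1) + -1 = gm x + -1 := by
    rw [D₂, OrderIso.symm_apply_apply, k₂_apply]
    have : x + 1 + -1 = x := by ring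
    rw [this]
  rw [step2, A_apply]
  have step3 : φ₁ (gm x + -1) + 1 = φ₁ (k₁ (gm x + -1)) := by rw [I₁]
  rw [step3, OrderIso.symm_apply_apply, k₁_apply]
  have : gm x + -1 + 1 = gm x := by ring
  rw [this, hgpm]

end


section



/-- An order isomorphism between `ℝ` and the interval `(-1, 1)` rescaled to `(0, 1)`. -/
def iso01 : Ioo (-1:ℝ) 1 ≃o Ioo (0:ℝ) 1 where
  toFun x := ⟨((x : ℝ) + 1)/2, by
    obtain ⟨h1, h2⟩ := x.2; exact ⟨by linarith, by linarith⟩⟩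
  invFun y := ⟨2*(y : ℝ) - 1, by
    obtain ⟨h1, h2⟩ := y.2; exact ⟨by linarith, by linarith⟩⟩
  left_inv x := by ext; show 2*(((x:ℝ)+1)/2) - 1 = x; ring
  right_inv y := by ext; show (2*(y:ℝ)-1+1)/2 = y; ring
  map_rel_iff' {a b} := by
    simp only [Equiv.coe_fn_mk, Subtype.mk_le_mk, ← Subtype.coe_le_coe]
    constructor <;> intro h <;> [linarith; linarith]

/-- A fixed order isomorphism `ℝ ≃o (0,1)`. -/
def psi : ℝ ≃o Ioo (0:ℝ) 1 := (orderIsoIooNegOneOne ℝ).trans iso01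

lemma fract_mem {x p : ℝ} (h : Int.fract (x - p) ≠ 0) : Int.fract (x - p) ∈ Ioo (0:ℝ) 1 :=
  ⟨(Int.fract_nonneg _).lt_of_ne (Ne.symm h), Int.fract_lt_one _⟩

/-- `u : ℝ ≃o ℝ` transplanted to `(0,1)` as a map of reals. -/
def core (u : ℝ ≃o ℝ) (t : ℝ) (h : t ∈ Ioo (0:ℝ) 1) : ℝ := (psi (u (psi.symm ⟨t, h⟩)) : ℝ)

lemma core_mem (u : ℝ ≃o ℝ) (t : ℝ) (h : t ∈ Ioo (0:ℝ) 1) : core u t h ∈ Ioo (0:ℝ) 1 :=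
  (psi (u (psi.symm ⟨t, h⟩))).2

lemma core_lt_core (u : ℝ ≃o ℝ) {s t : ℝ} (hs : s ∈ Ioo (0:ℝ) 1) (ht : t ∈ Ioo (0:ℝ) 1)
    (hst : s < t) : core u s hs < core u t ht := by
  have h1 : (⟨s, hs⟩ : Ioo (0:ℝ) 1) < ⟨t, ht⟩ := Subtype.mk_lt_mk.mpr hst
  have := psi.strictMono (u.strictMono (psi.symm.strictMono h1))
  exact this

lemma core_core (u v : ℝ ≃o ℝ) (t : ℝ) (h : t ∈ Ioo (0:ℝ) 1) :
    core u (core v t h) (core_mem v t h) = core (v.trans u) t h := by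
  unfold core
  congr 1
  congr 1
  rw [show (⟨(psi (v (psi.symm ⟨t, h⟩)) : ℝ), core_mem v t h⟩ : Ioo (0:ℝ) 1)
      = psi (v (psi.symm ⟨t, h⟩)) from Subtype.coe_eta _ _]
  rw [OrderIso.symm_apply_apply]
  rfl

lemma core_refl (t : ℝ) (h : t ∈ Ioo (0:ℝ) 1) : core (OrderIso.refl ℝ) t h = t := by
  unfold core
  rw [show (OrderIso.refl ℝ) (psi.symm ⟨t, h⟩) = psi.symm ⟨t, h⟩ from rfl,
    OrderIso.apply_symm_apply]

lemma core_congr (u : ℝ ≃o ℝ) {s t : ℝ} (hs : s ∈ Ioo (0:ℝ) 1) (ht : t ∈ Ioo (0:ℝ) 1)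
    (h : s = t) : core u s hs = core u t ht := by subst h; rfl

lemma core_symm_cancel (u : ℝ ≃o ℝ) (t : ℝ) (h : t ∈ Ioo (0:ℝ) 1) :
    core u (core u.symm t h) (core_mem u.symm t h) = t := by
  rw [core_core]
  unfold core
  rw [show (u.symm.trans u) (psi.symm ⟨t, h⟩) = u (u.symm (psi.symm ⟨t, h⟩)) from rfl,
    OrderIso.apply_symm_apply, OrderIso.apply_symm_apply]

/-- Extension of `u : ℝ ≃o ℝ` to a homeomorphism of `ℝ` supported on the
complement of `p + ℤ`, acting in each interval `(p+n, p+n+1)` via `psi`. -/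
def ePt (p : ℝ) (u : ℝ ≃o ℝ) (x : ℝ) : ℝ :=
  if h : Int.fract (x - p) = 0 then x
  else x - Int.fract (x - p) + core u (Int.fract (x - p)) (fract_mem h)

lemma ePt_of_eq (p : ℝ) (u : ℝ ≃o ℝ) {x : ℝ} (h : Int.fract (x - p) = 0) :
    ePt p u x = x := dif_pos h

lemma ePt_of_ne (p : ℝ) (u : ℝ ≃o ℝ) {x : ℝ} (h : Int.fract (x - p) ≠ 0) :
    ePt p u x = x - Int.fract (x - p) + core u (Int.fract (x - p)) (fract_mem h) := dif_neg h

lemma sub_fract (x p : ℝ) : x - Int.fract (x - p) = p + ⌊x - p⌋ := by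
  rw [Int.fract]; ring

lemma fract_eq_zero_iff {x p : ℝ} : Int.fract (x - p) = 0 ↔ x = p + ⌊x - p⌋ := by
  rw [Int.fract]
  constructor <;> intro h <;> linarith

lemma ePt_strictMono (p : ℝ) (u : ℝ ≃o ℝ) : StrictMono (ePt p u) := by
  intro x y hxy
  have hnm : (⌊x - p⌋ : ℤ) ≤ ⌊y - p⌋ := Int.floor_mono (by linarith)
  by_cases hx : Int.fract (x - p) = 0 <;> by_cases hy : Int.fract (y - p) = 0
  · rw [ePt_of_eq p u hx, ePt_of_eq p u hy]; exact hxy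
  · rw [ePt_of_eq p u hx, ePt_of_ne p u hy]
    obtain ⟨hs1, hs2⟩ := core_mem u _ (fract_mem hy)
    have hxe : x = p + ⌊x - p⌋ := fract_eq_zero_iff.mp hx
    rw [sub_fract]
    have : (⌊x - p⌋ : ℝ) ≤ (⌊y - p⌋ : ℝ) := by exact_mod_cast hnm
    linarith
  · rw [ePt_of_ne p u hx, ePt_of_eq p u hy]
    obtain ⟨hs1, hs2⟩ := core_mem u _ (fract_mem hx)
    have hye : y = p + ⌊y - p⌋ := fract_eq_zero_iff.mp hy
    rw [sub_fract]
    -- x < y = p + m with ⌊x-p⌋ ≤ m and fract (x-p) ≠ 0 forces ⌊x-p⌋ < m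
    have hlt : ⌊x - p⌋ < ⌊y - p⌋ := by
      rcases lt_or_eq_of_le hnm with h | h
      · exact h
      · exfalso
        have h1 : x - p < (⌊y - p⌋ : ℝ) := by linarith
        rw [← h] at h1
        have h2 : (⌊x - p⌋ : ℝ) ≤ x - p := Int.floor_le _
        have h3 : x - p = ⌊x - p⌋ := by
          rcases lt_or_eq_of_le h2 with h4 | h4
          · linarith
          · exact h4.symm
        exact hx (by rw [Int.fract]; linarith)
    have : (⌊x - p⌋ : ℝ) + 1 ≤ (⌊y - p⌋ : ℝ) := by exact_mod_cast hlt
    linarith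
  · rw [ePt_of_ne p u hx, ePt_of_ne p u hy, sub_fract, sub_fract]
    rcases lt_or_eq_of_le hnm with h | h
    · obtain ⟨hs1, hs2⟩ := core_mem u _ (fract_mem hx)
      obtain ⟨hs3, hs4⟩ := core_mem u _ (fract_mem hy)
      have : (⌊x - p⌋ : ℝ) + 1 ≤ (⌊y - p⌋ : ℝ) := by exact_mod_cast h
      linarith
    · have hfr : Int.fract (x - p) < Int.fract (y - p) := by
        rw [Int.fract, Int.fract, h]
        linarith
      have := core_lt_core u (fract_mem hx) (fract_mem hy) hfr
      have hcast : (⌊x - p⌋ : ℝ) = (⌊y - p⌋ : ℝ) := by exact_mod_cast h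
      linarith

lemma ePt_surjective (p : ℝ) (u : ℝ ≃o ℝ) : Function.Surjective (ePt p u) := by
  intro z
  by_cases hz : Int.fract (z - p) = 0
  · exact ⟨z, ePt_of_eq p u hz⟩
  · set n := ⌊z - p⌋ with hn
    set w := core u.symm (Int.fract (z - p)) (fract_mem hz) with hw
    obtain ⟨hw1, hw2⟩ := core_mem u.symm _ (fract_mem hz)
    refine ⟨p + n + w, ?_⟩
    have hfr : Int.fract (p + n + w - p) = w := by
      rw [show p + (n:ℝ) + w - p = w + n by ring, Int.fract_add_intCast, Int.fract_eq_self]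
      exact ⟨le_of_lt hw1, hw2⟩
    have hfrne : Int.fract (p + (n:ℝ) + w - p) ≠ 0 := by rw [hfr]; linarith
    rw [ePt_of_ne p u hfrne]
    have hcore : core u (Int.fract (p + (n:ℝ) + w - p)) (fract_mem hfrne)
        = Int.fract (z - p) :=
      (core_congr u (fract_mem hfrne) (core_mem u.symm _ (fract_mem hz)) hfr).trans
        (core_symm_cancel u _ (fract_mem hz))
    rw [hcore, hfr]
    have hfz : Int.fract (z - p) = z - p - n := by rw [hn, Int.fract]
    linarith

lemma ePt_per (p : ℝ) (u : ℝ ≃o ℝ) : Per (ePt p u) := by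
  intro x
  have hfr : Int.fract (x + 1 - p) = Int.fract (x - p) := by
    rw [show x + 1 - p = x - p + 1 by ring, Int.fract_add_one]
  by_cases h : Int.fract (x - p) = 0
  · rw [ePt_of_eq p u (by rw [hfr]; exact h), ePt_of_eq p u h]
  · have h' : Int.fract (x + 1 - p) ≠ 0 := by rw [hfr]; exact h
    rw [ePt_of_ne p u h', ePt_of_ne p u h]
    have : core u (Int.fract (x + 1 - p)) (fract_mem h')
        = core u (Int.fract (x - p)) (fract_mem h) := by
      congr 1
    rw [this, hfr]
    ring

lemma ePt_comp (p : ℝ) (u v : ℝ ≃o ℝ) (x : ℝ) :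
    ePt p u (ePt p v x) = ePt p (v.trans u) x := by
  by_cases h : Int.fract (x - p) = 0
  · rw [ePt_of_eq p v h, ePt_of_eq p u h, ePt_of_eq p (v.trans u) h]
  · rw [ePt_of_ne p v h, ePt_of_ne p (v.trans u) h]
    set s := core v (Int.fract (x - p)) (fract_mem h) with hs
    obtain ⟨hs1, hs2⟩ := core_mem v _ (fract_mem h)
    have hfr : Int.fract (x - Int.fract (x - p) + s - p) = s := by
      rw [sub_fract, show p + (⌊x - p⌋:ℝ) + s - p = s + ⌊x - p⌋ by ring,
        Int.fract_add_intCast, Int.fract_eq_self]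
      exact ⟨le_of_lt hs1, hs2⟩
    have hfrne : Int.fract (x - Int.fract (x - p) + s - p) ≠ 0 := by rw [hfr]; linarith
    rw [ePt_of_ne p u hfrne]
    have hcore : core u (Int.fract (x - Int.fract (x - p) + s - p)) (fract_mem hfrne)
        = core (v.trans u) (Int.fract (x - p)) (fract_mem h) :=
      (core_congr u (fract_mem hfrne) (core_mem v _ (fract_mem h)) hfr).trans
        (core_core u v _ _)
    rw [hcore, hfr]
    ring

/-- `ePt` as an order isomorphism. -/
def ePtIso (p : ℝ) (u : ℝ ≃o ℝ) : ℝ ≃o ℝ :=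
  StrictMono.orderIsoOfSurjective _ (ePt_strictMono p u) (ePt_surjective p u)

lemma ePtIso_apply (p : ℝ) (u : ℝ ≃o ℝ) (x : ℝ) : ePtIso p u x = ePt p u x := rfl

lemma ePt_refl (p : ℝ) (x : ℝ) : ePt p (OrderIso.refl ℝ) x = x := by
  by_cases h : Int.fract (x - p) = 0
  · exact ePt_of_eq p _ h
  · rw [ePt_of_ne p _ h, core_refl]; ring

lemma ePtIso_symm_apply (p : ℝ) (u : ℝ ≃o ℝ) (x : ℝ) :
    (ePtIso p u).symm x = ePt p u.symm x := by
  rw [OrderIso.symm_apply_eq, ePtIso_apply, ePt_comp]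
  rw [show u.symm.trans u = OrderIso.refl ℝ from by
    apply DFunLike.ext
    intro s
    exact u.apply_symm_apply s]
  exact (ePt_refl p x).symm

/-- Every periodic order isomorphism of `ℝ` fixing a point `p` is a commutator of
periodic order isomorphisms. -/
lemma fix_comm (G : ℝ ≃o ℝ) (hper : Per ⇑G) (p : ℝ) (hp : G p = p) :
    ∃ A B : ℝ ≃o ℝ, Per ⇑A ∧ Per ⇑B ∧ ∀ x, G x = A (B (A.symm (B.symm x))) := by
  classical
  have hp1 : G (p + 1) = p + 1 := by rw [hper, hp]
  have hmem : ∀ s : Ioo (0:ℝ) 1, G (p + (s:ℝ)) - p ∈ Ioo (0:ℝ) 1 := by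
    intro s
    obtain ⟨h1, h2⟩ := s.2
    constructor
    · have := G.strictMono (show p < p + (s:ℝ) by linarith)
      rw [hp] at this; linarith
    · have := G.strictMono (show p + (s:ℝ) < p + 1 by linarith)
      rw [hp1] at this; linarith
  set gfun : ℝ → ℝ := fun s => psi.symm ⟨G (p + (psi s : ℝ)) - p, hmem (psi s)⟩ with hgfun
  have hgmono : StrictMono gfun := by
    intro a b hab
    apply psi.symm.strictMono
    apply Subtype.mk_lt_mk.mpr
    have h1 : (psi a : ℝ) < psi b := psi.strictMono hab
    have := G.strictMono (show p + (psi a : ℝ) < p + (psi b : ℝ) by linarith)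
    linarith
  have hgsurj : Function.Surjective gfun := by
    intro t
    have hmem2 : G.symm (p + (psi t : ℝ)) - p ∈ Ioo (0:ℝ) 1 := by
      obtain ⟨h1, h2⟩ := (psi t).2
      have hsp : G.symm p = p := G.symm_apply_eq.mpr hp.symm
      have hsp1 : G.symm (p + 1) = p + 1 := G.symm_apply_eq.mpr hp1.symm
      constructor
      · have := G.symm.strictMono (show p < p + (psi t : ℝ) by linarith)
        rw [hsp] at this; linarith
      · have := G.symm.strictMono (show p + (psi t : ℝ) < p + 1 by linarith)
        rw [hsp1] at this; linarith
    refine ⟨psi.symm ⟨G.symm (p + (psi t : ℝ)) - p, hmem2⟩, ?_⟩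
    show psi.symm _ = t
    rw [OrderIso.symm_apply_eq]
    apply Subtype.ext
    show G (p + (psi (psi.symm ⟨G.symm (p + (psi t : ℝ)) - p, hmem2⟩) : ℝ)) - p = (psi t : ℝ)
    rw [OrderIso.apply_symm_apply]
    show G (p + (G.symm (p + (psi t : ℝ)) - p)) - p = (psi t : ℝ)
    rw [show p + (G.symm (p + (psi t : ℝ)) - p) = G.symm (p + (psi t : ℝ)) by ring,
      OrderIso.apply_symm_apply]
    ring
  set g : ℝ ≃o ℝ := StrictMono.orderIsoOfSurjective _ hgmono hgsurj with hg
  have hgapp : ∀ s, g s = gfun s := fun _ => rfl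
  -- the extension of g at p recovers G
  have hEg : ∀ x, ePt p g x = G x := by
    intro x
    by_cases h : Int.fract (x - p) = 0
    · rw [ePt_of_eq p g h]
      have hxe : x = p + ⌊x - p⌋ := fract_eq_zero_iff.mp h
      rw [hxe, hper.int ⌊x - p⌋ p, hp]
    · rw [ePt_of_ne p g h]
      set t := Int.fract (x - p) with ht
      have hcore : core g t (fract_mem h) = G (p + t) - p := by
        simp only [core, hgapp, hgfun, OrderIso.apply_symm_apply]
      rw [hcore, sub_fract]
      have hx : x = p + ⌊x - p⌋ + t := by rw [ht, Int.fract]; ring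
      calc p + (⌊x - p⌋ : ℝ) + (G (p + t) - p) = G (p + t) + (⌊x - p⌋ : ℝ) := by ring
      _ = G (p + t + (⌊x - p⌋ : ℝ)) := (hper.int ⌊x - p⌋ (p + t)).symm
      _ = G x := by congr 1; rw [ht, Int.fract]; ring
  obtain ⟨A', B', hAB⟩ := comm_one g
  refine ⟨ePtIso p A', ePtIso p B', ePt_per p A', ePt_per p B', fun x => ?_⟩
  have hC : g = B'.symm.trans (A'.symm.trans (B'.trans A')) := by
    apply DFunLike.ext
    intro s
    exact hAB s
  rw [ePtIso_apply, ePtIso_apply, ePtIso_symm_apply, ePtIso_symm_apply,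
    ePt_comp, ePt_comp, ePt_comp, ← hC, hEg]

end
lemma mkCircle_orient (F : ℝ ≃o ℝ) (h : Per ⇑F) : OrientationPreserving (mkCircle F h) :=
  ⟨⟨⟨⇑F, F.monotone⟩, h⟩, fun _ => rfl⟩

lemma refl_orient : OrientationPreserving (Homeomorph.refl S1) :=
  ⟨1, fun x => by simp⟩

/-- Extraction of an order-isomorphism lift from an orientation preserving homeomorphism. -/
lemma exists_lift (f : S1 ≃ₜ S1) (hf : OrientationPreserving f) :
    ∃ F : ℝ ≃o ℝ, Per ⇑F ∧ ∀ t : ℝ, f (t : S1) = ((F t : ℝ) : S1) := by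
  obtain ⟨F₀, hl⟩ := hf
  have hmono : Monotone ⇑F₀ := F₀.monotone
  have hsm : StrictMono ⇑F₀ := by
    intro a b hab
    rcases lt_or_eq_of_le (hmono hab.le) with h | h
    · exact h
    · exfalso
      set cc := min b (a + 1/2) with hcc
      have hac : a < cc := lt_min hab (by linarith)
      have hcb : cc ≤ b := min_le_left _ _
      have hc1 : cc - a < 1 := by
        have : cc ≤ a + 1/2 := min_le_right _ _
        linarith
      have h1 : F₀ cc = F₀ a := le_antisymm (by rw [h]; exact hmono hcb) (hmono hac.le)
      have h2 : f (a : S1) = f (cc : S1) := by rw [hl, hl, h1]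
      have h3 : (a : S1) = (cc : S1) := f.injective h2
      obtain ⟨k, hk⟩ := coe_eq_coe.mp h3
      have hk0 : (0:ℝ) < (k:ℝ) := by linarith
      have hk1 : (k:ℝ) < 1 := by linarith
      have hk0' : 0 < k := by exact_mod_cast hk0
      have hk1' : k < 1 := by exact_mod_cast hk1
      omega
  have hsurj : Function.Surjective ⇑F₀ := by
    intro y
    obtain ⟨s, hs⟩ := f.surjective ((y:ℝ) : S1)
    obtain ⟨t, rfl⟩ := QuotientAddGroup.mk_surjective s
    rw [hl] at hs
    obtain ⟨k, hk⟩ := coe_eq_coe.mp hs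
    refine ⟨t + k, ?_⟩
    rw [F₀.map_add_int, ← hk]
  exact ⟨StrictMono.orderIsoOfSurjective _ hsm hsurj, fun x => F₀.map_add_one x,
    fun t => hl t⟩

end UP

/-- `Homeo⁺(S¹)` is uniformly perfect: every element is a product of (at most) three
commutators of orientation preserving homeomorphisms. -/
theorem stmt14 (f : S1 ≃ₜ S1) (hf : OrientationPreserving f) :
    ∃ a₁ b₁ a₂ b₂ a₃ b₃ : S1 ≃ₜ S1,
      OrientationPreserving a₁ ∧ OrientationPreserving b₁ ∧
      OrientationPreserving a₂ ∧ OrientationPreserving b₂ ∧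
      OrientationPreserving a₃ ∧ OrientationPreserving b₃ ∧
      ∀ x, f x =
        a₁ (b₁ (a₁.symm (b₁.symm
          (a₂ (b₂ (a₂.symm (b₂.symm
            (a₃ (b₃ (a₃.symm (b₃.symm x))))))))))) := by
  classical
  obtain ⟨F, hFper, hFl⟩ := UP.exists_lift f hf
  set m : ℤ := ⌊F 0⌋ with hm
  set c : ℝ := F 0 - m with hc
  have hc0 : 0 ≤ c := by rw [hc]; linarith [Int.floor_le (F 0)]
  have hc1 : c < 1 := by rw [hc]; linarith [Int.lt_floor_add_one (F 0)]
  set d : ℝ := (1 + c)/2 with hd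
  have hd0 : (0:ℝ) < d := by rw [hd]; linarith
  have hd1 : d < 1 := by rw [hd]; linarith
  have hdmem : d ∈ Set.Ioo (0:ℝ) 1 := ⟨hd0, hd1⟩
  have h1d : 1 - d ∈ Set.Ioo (0:ℝ) 1 := ⟨by linarith, by linarith⟩
  set r : ℝ := (UP.psi.symm ⟨d, hdmem⟩ : ℝ) - (UP.psi.symm ⟨1 - d, h1d⟩ : ℝ) with hr
  set H : ℝ ≃o ℝ := UP.ePtIso d (OrderIso.addRight r) with hH
  have hHper : UP.Per ⇑H := UP.ePt_per d _
  have hfrd : Int.fract ((0:ℝ) - d) = 1 - d := by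
    rw [zero_sub, Int.fract_neg, Int.fract_eq_self.mpr ⟨hd0.le, hd1⟩]
    rw [Int.fract_eq_self.mpr ⟨hd0.le, hd1⟩]
    linarith
  have hfrdne : Int.fract ((0:ℝ) - d) ≠ 0 := by rw [hfrd]; intro hcon; linarith
  have hH0 : H 0 = c := by
    rw [hH, UP.ePtIso_apply, UP.ePt_of_ne d _ hfrdne]
    have hco : UP.core (OrderIso.addRight r) (Int.fract (0 - d)) (UP.fract_mem hfrdne)
        = d := by
      rw [UP.core_congr _ (UP.fract_mem hfrdne) h1d hfrd]
      unfold UP.core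
      have harg : (OrderIso.addRight r) ((UP.psi.symm ⟨1 - d, h1d⟩ : ℝ))
          = (UP.psi.symm ⟨d, hdmem⟩ : ℝ) := by
        show (UP.psi.symm ⟨1 - d, h1d⟩ : ℝ) + r = _
        rw [hr]; ring
      rw [harg, OrderIso.apply_symm_apply]
    rw [hco, hfrd]
    rw [hd] at *
    linarith
  have hHd : H d = d := by
    rw [hH, UP.ePtIso_apply]
    apply UP.ePt_of_eq
    rw [sub_self, Int.fract_zero]
  set G₁ : ℝ ≃o ℝ := (H.symm.trans F).trans (OrderIso.addRight (-(m:ℝ))) with hG₁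
  have hG₁app : ∀ x, G₁ x = F (H.symm x) + -(m:ℝ) := fun _ => rfl
  have hG₁per : UP.Per ⇑G₁ := by
    intro x
    rw [hG₁app, hG₁app, hHper.symm x, hFper]
    ring
  have hG₁c : G₁ c = c := by
    rw [hG₁app]
    have hs0 : H.symm c = 0 := by rw [← hH0, OrderIso.symm_apply_apply]
    rw [hs0, hc]
    ring
  obtain ⟨A₁, B₁, hA₁per, hB₁per, hG₁comm⟩ := UP.fix_comm G₁ hG₁per c hG₁c
  obtain ⟨A₂, B₂, hA₂per, hB₂per, hHcomm⟩ := UP.fix_comm H hHper d hHd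
  refine ⟨UP.mkCircle A₁ hA₁per, UP.mkCircle B₁ hB₁per, UP.mkCircle A₂ hA₂per,
    UP.mkCircle B₂ hB₂per, Homeomorph.refl S1, Homeomorph.refl S1,
    UP.mkCircle_orient _ _, UP.mkCircle_orient _ _, UP.mkCircle_orient _ _,
    UP.mkCircle_orient _ _, UP.refl_orient, UP.refl_orient, fun x => ?_⟩
  induction x using QuotientAddGroup.induction_on with
  | H t =>
  simp only [Homeomorph.refl_symm, Homeomorph.refl_apply, id_eq, UP.mkCircle_apply,
    UP.mkCircle_symm_apply]
  rw [← hHcomm, ← hG₁comm, hG₁app, OrderIso.symm_apply_apply, hFl]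
  have : F t + -(m:ℝ) = F t + ((-m : ℤ) : ℝ) := by push_cast; ring
  rw [this, UP.coe_add_int]
end
end

section
/- Let J and J′ be disjoint non-trivial closed arcs in the circle and let g : J → J′ be an orientation preserving homeomorphism. Then there exists an orientation reversing homeomorphism γ : J → J′ such that γ ∘ g⁻¹ ∘ γ = g (as maps J → J′ after the appropriate compositions). -/
noncomputable section

open scoped Classical

/-- If `J` and `J'` are disjoint non-trivial closed arcs in the circle and `g : J → J'`
is an orientation preserving homeomorphism, then there is an orientation reversing
homeomorphism `γ : J → J'` with `γ ∘ g⁻¹ ∘ γ = g`.  (Orientations are expressed via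
strictly monotone lifts on the parametrising intervals.) -/
theorem stmt18 (a s b t : ℝ) (hs : 0 < s) (ht : 0 < t) (hs1 : s < 1) (ht1 : t < 1)
    (J J' : Set S1)
    (hJ : J = (fun x : ℝ => (x : S1)) '' Set.Icc a (a + s))
    (hJ' : J' = (fun x : ℝ => (x : S1)) '' Set.Icc b (b + t))
    (hdisj : Disjoint J J')
    (g : S1 → S1) (hg : Set.BijOn g J J') (hgc : ContinuousOn g J)
    (G : ℝ → ℝ) (hG : StrictMonoOn G (Set.Icc a (a + s)))
    (hGim : G '' Set.Icc a (a + s) = Set.Icc b (b + t))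
    (hlift : ∀ x ∈ Set.Icc a (a + s), g (x : S1) = ((G x : ℝ) : S1)) :
    ∃ γ : S1 → S1, Set.BijOn γ J J' ∧ ContinuousOn γ J ∧
      (∃ Γ : ℝ → ℝ, StrictAntiOn Γ (Set.Icc a (a + s)) ∧
        Γ '' Set.Icc a (a + s) = Set.Icc b (b + t) ∧
        ∀ x ∈ Set.Icc a (a + s), γ (x : S1) = ((Γ x : ℝ) : S1)) ∧
      ∀ x ∈ J, γ (Function.invFunOn g J (γ x)) = g x := by
  classical
  -- reflection on the circle and its lift
  set r : ℝ → ℝ := fun x => 2*a + s - x with hr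
  set ρ : S1 → S1 := fun z => ((2*a + s : ℝ) : S1) - z with hρ
  have hrmem : ∀ x ∈ Set.Icc a (a + s), r x ∈ Set.Icc a (a + s) := by
    rintro x ⟨h1, h2⟩; exact ⟨by simp [hr]; linarith, by simp [hr]; linarith⟩
  have hrr : ∀ x, r (r x) = x := by intro x; simp [hr]
  have hρcoe : ∀ x : ℝ, ρ ((x : ℝ) : S1) = ((r x : ℝ) : S1) := by
    intro x; simp [hρ, hr, AddCircle.coe_sub]
  have hρρ : ∀ z, ρ (ρ z) = z := by intro z; simp [hρ]
  have hρJ : Set.MapsTo ρ J J := by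
    rintro z hz
    rw [hJ] at hz ⊢
    obtain ⟨x, hx, rfl⟩ := hz
    exact ⟨r x, hrmem x hx, (hρcoe x).symm⟩
  have hρbij : Set.BijOn ρ J J := by
    refine ⟨hρJ, fun z _ w _ h => ?_, fun z hz => ⟨ρ z, hρJ hz, hρρ z⟩⟩
    have := congrArg ρ h; simpa [hρρ] using this
  refine ⟨g ∘ ρ, hg.comp hρbij, hgc.comp (Continuous.continuousOn (by
      exact (continuous_sub_left _ : Continuous ρ))) hρJ,
    ⟨fun x => G (r x), ?_, ?_, ?_⟩, ?_⟩
  · -- strict anti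
    intro x hx y hy hxy
    have h1 : r y < r x := by simp [hr]; linarith
    exact hG (hrmem y hy) (hrmem x hx) h1
  · -- image
    have hrim : r '' Set.Icc a (a + s) = Set.Icc a (a + s) := by
      apply Set.Subset.antisymm
      · rintro _ ⟨x, hx, rfl⟩; exact hrmem x hx
      · intro x hx; exact ⟨r x, hrmem x hx, hrr x⟩
    rw [show ((fun x => G (r x)) '' Set.Icc a (a + s)) = G '' (r '' Set.Icc a (a + s)) from
      (Set.image_image G r _).symm, hrim, hGim]
  · -- lift property
    intro x hx
    have : (g ∘ ρ) ((x : ℝ) : S1) = g ((r x : ℝ) : S1) := by simp [hρcoe x]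
    rw [this, hlift (r x) (hrmem x hx)]
  · -- the conjugacy equation
    intro z hz
    have hρz : ρ z ∈ J := hρJ hz
    have hinv : Function.invFunOn g J ((g ∘ ρ) z) = ρ z :=
      hg.injOn.leftInvOn_invFunOn hρz
    rw [Function.comp_apply, hinv]
    show g (ρ (ρ z)) = g z
    rw [hρρ]
end
end
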